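/- With notation as above (n = 2, d ≥ 1, J_{d,2} the Jacobian ideal of the d-linear map), for any choice of u₂ ∈ {1,2} and any 2-level labeling ν (a pair of (d−1)-tuples with entries in {1,2}), the element z = a_{1,1}a_{1,u₂}·Π_{j=1}^{d−1} a_{1,ν(1,j)}a_{1,ν(2,j)} + a_{1,2}a_{2,u₂}·Π_{j=1}^{d−1} a_{1,ν(1,j)}a_{2,ν(2,j)} lies in J_{d,2}, provided that u₂ = 2 or ν(2,j) = 2 for some j. -/
import Mathlib


open Finset MvPolynomial

/-- The coefficient ring `R = ℚ[a_{1,1}, a_{1,2}, a_{2,1}, a_{2,2}]`. -/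
abbrev Rring : Type := MvPolynomial (Fin 2 × Fin 2) ℚ

/-- The indeterminate `a_{i,j}`. -/
noncomputable def aa (i j : Fin 2) : Rring := MvPolynomial.X (i, j)

/-- The Jacobian matrix `D(f)` of the `d`-linear map
`f_i = x_i − (t(a_{i,1}x₁ + a_{i,2}x₂))^d`, as a matrix over `R[t, x₁, x₂]`
(variable `0` is `t`, variables `1, 2` are `x₁, x₂`):
`(D f)_{i,k} = δ_{i,k} − t·d·a_{i,k}·(t(a_{i,1}x₁+a_{i,2}x₂))^{d−1}`. -/
noncomputable def Df (d : ℕ) : Matrix (Fin 2) (Fin 2) (MvPolynomial (Fin 3) Rring) :=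
  Matrix.of fun i k =>
    (if i = k then 1 else 0) -
      (d : MvPolynomial (Fin 3) Rring) * X 0 * C (aa i k) *
        (X 0 * (C (aa i 0) * X 1 + C (aa i 1) * X 2)) ^ (d - 1)

/-- The ideal `J_{d,2} ⊆ R` generated by the coefficients of all nonconstant
monomials (in `t, x₁, x₂`) of the Jacobian determinant `det(D f)`. -/
noncomputable def Jideal (d : ℕ) : Ideal Rring :=
  Ideal.span ((fun m => MvPolynomial.coeff m (Df d).det) '' {m | m ≠ 0})

-- Q polynomial
noncomputable def QQ (i : Fin 2) : MvPolynomial (Fin 3) Rring :=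
  C (aa i 0) * X 1 + C (aa i 1) * X 2

lemma Df_entry (e : ℕ) (i j : Fin 2) :
    Df (e+1) i j = (if i = j then 1 else 0) -
      monomial (Finsupp.single 0 (e+1)) (((e:Rring)+1) * aa i j) * (QQ i) ^ e := by
  simp only [Df, Matrix.of_apply]
  congr 1
  rw [mul_pow, ← C_mul_X_pow_eq_monomial, C_mul]
  have hc : ((e:MvPolynomial (Fin 3) Rring) + 1) = C ((e:Rring)+1) := by
    rw [map_add, map_one, map_natCast]
  have hX : (X 0 : MvPolynomial (Fin 3) Rring) ^ (e+1) = X 0 * X 0 ^ e := by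
    rw [pow_succ']
  simp only [Nat.add_sub_cancel, Nat.cast_add, Nat.cast_one, hc, hX, QQ]
  ring

lemma coeff_linear_pow (a b : Rring) (n k : ℕ) (hk : k ≤ n) :
    coeff (Finsupp.single 1 k + Finsupp.single 2 (n - k))
      ((C a * X 1 + C b * X 2 : MvPolynomial (Fin 3) Rring) ^ n)
    = (n.choose k : Rring) * (a ^ k * b ^ (n - k)) := by
  rw [add_pow, coeff_sum]
  have key : ∀ i, (C a * X 1 : MvPolynomial (Fin 3) Rring)^i * (C b * X 2)^(n-i)
      * (n.choose i : MvPolynomial (Fin 3) Rring)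
      = monomial (Finsupp.single 1 i + Finsupp.single 2 (n-i))
          ((n.choose i : Rring) * (a^i * b^(n-i))) := by
    intro i
    have hc : ((n.choose i : MvPolynomial (Fin 3) Rring)) = C ((n.choose i : Rring)) :=
      (map_natCast (C : Rring →+* MvPolynomial (Fin 3) Rring) (n.choose i)).symm
    rw [mul_pow, mul_pow, ← C_pow, ← C_pow, X_pow_eq_monomial, X_pow_eq_monomial, hc]
    rw [C_mul_monomial, C_mul_monomial, monomial_mul, mul_comm, C_mul_monomial]
    ring_nf
  simp only [key, coeff_monomial]
  rw [Finset.sum_eq_single k]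
  · simp
  · intro i hi hik
    rw [if_neg]
    intro hcon
    apply hik
    have := DFunLike.congr_fun hcon (1 : Fin 3)
    simpa using this
  · intro hk'
    exact absurd (Finset.mem_range.2 (Nat.lt_succ_of_le hk)) hk'

lemma coeff_det (e k : ℕ) (hk : k ≤ e) :
    coeff (Finsupp.single 0 (e+1) + (Finsupp.single 1 k + Finsupp.single 2 (e - k)))
      (Df (e+1)).det
    = -((((e:Rring)+1) * (e.choose k : Rring)) *
        (aa 0 0 * (aa 0 0 ^ k * aa 0 1 ^ (e-k)) + aa 1 1 * (aa 1 0 ^ k * aa 1 1 ^ (e-k)))) := by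
  rw [Matrix.det_fin_two]
  simp only [Df_entry]
  simp only [if_true, if_neg (show (0:Fin 2) ≠ 1 by decide), if_neg (show (1:Fin 2) ≠ 0 by decide)]
  set s0 : Fin 3 →₀ ℕ := Finsupp.single 0 (e+1) with hs0
  set m' : Fin 3 →₀ ℕ := Finsupp.single 1 k + Finsupp.single 2 (e - k) with hm'
  -- expand the determinant
  have expand :
      (1 - monomial s0 (((e:Rring)+1) * aa 0 0) * QQ 0 ^ e) *
        (1 - monomial s0 (((e:Rring)+1) * aa 1 1) * QQ 1 ^ e) -
      (0 - monomial s0 (((e:Rring)+1) * aa 0 1) * QQ 0 ^ e) *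
        (0 - monomial s0 (((e:Rring)+1) * aa 1 0) * QQ 1 ^ e)
      = 1 - monomial s0 (((e:Rring)+1) * aa 0 0) * QQ 0 ^ e
          - monomial s0 (((e:Rring)+1) * aa 1 1) * QQ 1 ^ e
          + ((monomial s0 (((e:Rring)+1) * aa 0 0) * monomial s0 (((e:Rring)+1) * aa 1 1)
              - monomial s0 (((e:Rring)+1) * aa 0 1) * monomial s0 (((e:Rring)+1) * aa 1 0))
             * (QQ 0 ^ e * QQ 1 ^ e)) := by ring
  rw [expand]
  have hcross : ∀ c c' : Rring,
      coeff (s0 + m') ((monomial s0 c * monomial s0 c') * (QQ 0 ^ e * QQ 1 ^ e)) = 0 := by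
    intro c c'
    rw [monomial_mul, coeff_monomial_mul']
    rw [if_neg]
    intro hle
    have := hle 0
    simp [hs0, hm', Finsupp.single_apply] at this
  have hone : coeff (s0 + m') (1 : MvPolynomial (Fin 3) Rring) = 0 := by
    rw [coeff_one, if_neg]
    intro hcon
    have := DFunLike.congr_fun hcon (0 : Fin 3)
    simp [hs0, hm', Finsupp.single_apply] at this
  have hT : ∀ (c : Rring) (i : Fin 2),
      coeff (s0 + m') (monomial s0 c * QQ i ^ e) = c * coeff m' (QQ i ^ e) :=
    fun c i => coeff_monomial_mul m' s0 c _
  rw [sub_mul, coeff_add, coeff_sub, coeff_sub, coeff_sub, hone, hT, hT, hcross, hcross]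
  have hq0 : coeff m' (QQ 0 ^ e) = (e.choose k : Rring) * (aa 0 0 ^ k * aa 0 1 ^ (e-k)) :=
    coeff_linear_pow _ _ _ _ hk
  have hq1 : coeff m' (QQ 1 ^ e) = (e.choose k : Rring) * (aa 1 0 ^ k * aa 1 1 ^ (e-k)) :=
    coeff_linear_pow _ _ _ _ hk
  rw [hq0, hq1]
  ring

lemma fin2_cases (x : Fin 2) : x = 0 ∨ x = 1 := by fin_cases x <;> simp

lemma g_mem (d k : ℕ) (hd : 1 ≤ d) (hk : k ≤ d - 1) :
    aa 0 0 * (aa 0 0 ^ k * aa 0 1 ^ (d-1-k)) + aa 1 1 * (aa 1 0 ^ k * aa 1 1 ^ (d-1-k))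
      ∈ Jideal d := by
  obtain ⟨e, rfl⟩ : ∃ e, d = e + 1 := ⟨d - 1, by omega⟩
  simp only [Nat.add_sub_cancel] at hk ⊢
  set m : Fin 3 →₀ ℕ := Finsupp.single 0 (e+1) + (Finsupp.single 1 k + Finsupp.single 2 (e - k))
    with hm
  have hm0 : m ≠ 0 := by
    intro hcon
    have := DFunLike.congr_fun hcon (0 : Fin 3)
    simp [hm, Finsupp.single_apply] at this
  have hgen : coeff m (Df (e+1)).det ∈ Jideal (e+1) :=
    Ideal.subset_span ⟨m, hm0, rfl⟩
  have hq : (((e:ℚ)+1) * (e.choose k : ℚ)) ≠ 0 := by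
    have h1 : (0:ℚ) < (e:ℚ)+1 := by positivity
    have h2 : (0:ℚ) < (e.choose k : ℚ) := by exact_mod_cast Nat.choose_pos hk
    exact (mul_pos h1 h2).ne'
  have key : aa 0 0 * (aa 0 0 ^ k * aa 0 1 ^ (e-k)) + aa 1 1 * (aa 1 0 ^ k * aa 1 1 ^ (e-k))
      = C (-((((e:ℚ)+1) * (e.choose k : ℚ))⁻¹)) * coeff m (Df (e+1)).det := by
    rw [hm, coeff_det e k hk]
    have hc : C (((e:ℚ)+1) * (e.choose k : ℚ)) = ((e:Rring)+1) * ((e.choose k : Rring)) := by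
      rw [map_mul, map_add, map_one, map_natCast, map_natCast]
    rw [← hc, map_neg, neg_mul_neg,
      ← mul_assoc (C ((((e:ℚ)+1) * (e.choose k : ℚ))⁻¹)) (C (((e:ℚ)+1) * (e.choose k : ℚ))),
      ← map_mul, inv_mul_cancel₀ hq, map_one, one_mul]
  rw [key]
  exact Ideal.mul_mem_left _ _ hgen


/-- (Lemma 2 of the paper.)  For `u₂ ∈ {1,2}` and a 2-level labeling `ν`, the fern
element `z(fern_{d,2}, (1, u₂; ν)) =
  a_{1,1}a_{1,u₂} Π_j a_{1,ν(1,j)}a_{1,ν(2,j)} + a_{1,2}a_{2,u₂} Π_j a_{1,ν(1,j)}a_{2,ν(2,j)}`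
lies in `J_{d,2}`, provided `u₂ = 2` or `ν(2,j) = 2` for some `j`.
(Indices `1, 2` of the paper are `0, 1 : Fin 2` here.) -/
theorem fern_element_mem_of_two (d : ℕ) (hd : 1 ≤ d)
    (u₂ : Fin 2) (ν : Fin 2 → Fin (d - 1) → Fin 2)
    (h : u₂ = 1 ∨ ∃ j, ν 1 j = 1) :
    aa 0 0 * aa 0 u₂ * (∏ j, aa 0 (ν 0 j) * aa 0 (ν 1 j)) +
      aa 0 1 * aa 1 u₂ * (∏ j, aa 0 (ν 0 j) * aa 1 (ν 1 j)) ∈ Jideal d := by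
  classical
  set A : Rring := ∏ j, aa 0 (ν 0 j) with hA
  have hsplit : ∀ i : Fin 2, (∏ j, aa 0 (ν 0 j) * aa i (ν 1 j)) = A * ∏ j, aa i (ν 1 j) :=
    fun i => Finset.prod_mul_distrib
  obtain ⟨k0, hk0⟩ : ∃ k0, (Finset.univ.filter (fun j => ν 1 j = 0)).card = k0 := ⟨_, rfl⟩
  have hcard : k0 + (Finset.univ.filter (fun j => ¬ (ν 1 j = 0))).card = d - 1 := by
    rw [← hk0, Finset.card_filter_add_card_filter_not]; simp
  have hk0le : k0 ≤ d - 1 := by omega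
  have hprod : ∀ i : Fin 2, (∏ j, aa i (ν 1 j)) = aa i 0 ^ k0 * aa i 1 ^ (d-1-k0) := by
    intro i
    have hite : ∀ j : Fin (d-1), aa i (ν 1 j) = if ν 1 j = 0 then aa i 0 else aa i 1 := by
      intro j
      rcases fin2_cases (ν 1 j) with hj | hj <;> simp [hj]
    rw [Finset.prod_congr rfl (fun j _ => hite j), Finset.prod_ite,
      Finset.prod_const, Finset.prod_const, hk0]
    congr 1
    congr 1
    omega
  rw [hsplit, hsplit, hprod, hprod]
  by_cases hu : u₂ = 1
  · subst hu
    have hg := g_mem d k0 hd hk0le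
    rw [show aa 0 0 * aa 0 1 * (A * (aa 0 0 ^ k0 * aa 0 1 ^ (d-1-k0))) +
        aa 0 1 * aa 1 1 * (A * (aa 1 0 ^ k0 * aa 1 1 ^ (d-1-k0)))
      = (A * aa 0 1) *
        (aa 0 0 * (aa 0 0 ^ k0 * aa 0 1 ^ (d-1-k0)) + aa 1 1 * (aa 1 0 ^ k0 * aa 1 1 ^ (d-1-k0)))
      by ring]
    exact Ideal.mul_mem_left _ _ hg
  · have hu0 : u₂ = 0 := (fin2_cases u₂).resolve_right hu
    subst hu0
    obtain ⟨j₀, hj₀⟩ := h.resolve_left hu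
    clear h
    have hne : (Finset.univ.filter (fun j => ν 1 j = 0)) ≠ Finset.univ := by
      intro hcon
      have : ν 1 j₀ = 0 := by
        have := Finset.mem_filter.mp (hcon ▸ Finset.mem_univ j₀)
        exact this.2
      rw [hj₀] at this
      exact absurd this (by decide)
    have hklt : k0 < d - 1 := by
      have := Finset.card_lt_card (Finset.ssubset_iff_subset_ne.mpr
        ⟨Finset.subset_univ _, hne⟩)
      rw [hk0] at this
      simpa using this
    have hk1 : k0 + 1 ≤ d - 1 := hklt
    have hg := g_mem d (k0+1) hd hk1
    have hr : d - 1 - k0 = (d - 1 - (k0+1)) + 1 := by omega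
    rw [hr]
    set r := d - 1 - (k0+1) with hrr
    rw [show aa 0 0 * aa 0 0 * (A * (aa 0 0 ^ k0 * aa 0 1 ^ (r+1))) +
        aa 0 1 * aa 1 0 * (A * (aa 1 0 ^ k0 * aa 1 1 ^ (r+1)))
      = (A * aa 0 1) *
        (aa 0 0 * (aa 0 0 ^ (k0+1) * aa 0 1 ^ r) + aa 1 1 * (aa 1 0 ^ (k0+1) * aa 1 1 ^ r))
      by ring]
    exact Ideal.mul_mem_left _ _ hg
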